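/- arXiv:math/0604229 — 5 statements merged into one kernel-verified Lean document; each statement's English description precedes it below -/
import Mathlib

section
/- Let P: ℂ → ℂ^{n×n} be a matrix polynomial that is invertible at every point of an open set U ⊆ ℂ. Then the function λ ↦ s_n(λ)⁻¹, where s_n(λ) denotes the smallest singular value of the matrix P(λ), is subharmonic on U. -/
open Matrix Finset

/-- The singular values of a complex `N × N` matrix, arranged in decreasing order:
`svals A 0 ≥ svals A 1 ≥ ... ≥ svals A (N-1)`; that is, `svals A ⟨j-1,_⟩` is the
paper's `s_j(A)`, the nonnegative square roots of the eigenvalues of `Aᴴ * A`. -/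
noncomputable def svals {N : ℕ} (A : Matrix (Fin N) (Fin N) ℂ) : Fin N → ℝ :=
  fun i =>
    Real.sqrt ((Matrix.isHermitian_conjTranspose_mul_self A).eigenvalues
      (Tuple.sort ((Matrix.isHermitian_conjTranspose_mul_self A).eigenvalues) i.rev))

/-- The smallest singular value `s_n(A)` of a complex `(N+1) × (N+1)` matrix. -/
noncomputable def sMin {N : ℕ} (A : Matrix (Fin (N + 1)) (Fin (N + 1)) ℂ) : ℝ :=
  svals A (Fin.last N)

/-- The spectral norm of a matrix: the operator norm induced by the Euclidean vector norm. -/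
noncomputable def specNorm {N : ℕ} (A : Matrix (Fin N) (Fin N) ℂ) : ℝ :=
  ‖Matrix.toEuclideanCLM (𝕜 := ℂ) A‖

/-- Euclidean norm of a vector in `ℂ^N`. -/
noncomputable def enorm' {N : ℕ} (x : Fin N → ℂ) : ℝ :=
  ‖(WithLp.equiv 2 (Fin N → ℂ)).symm x‖

/-- Evaluation of the matrix polynomial `P(z) = Σ_{j=0}^m P_j z^j`. -/
noncomputable def polyEval {N m : ℕ} (P : Fin (m + 1) → Matrix (Fin N) (Fin N) ℂ) (z : ℂ) :
    Matrix (Fin N) (Fin N) ℂ :=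
  ∑ j : Fin (m + 1), z ^ (j : ℕ) • P j

/-- Evaluation of the derivative `P'(z) = Σ_{j=1}^m j P_j z^{j-1}`. -/
noncomputable def polyDerivEval {N m : ℕ} (P : Fin (m + 1) → Matrix (Fin N) (Fin N) ℂ)
    (z : ℂ) : Matrix (Fin N) (Fin N) ℂ :=
  ∑ j : Fin (m + 1), (((j : ℕ) : ℂ) * z ^ ((j : ℕ) - 1)) • P j

/-- Evaluation of the weight polynomial `w(x) = Σ_{j=0}^m w_j x^j`. -/
noncomputable def wEval {m : ℕ} (w : Fin (m + 1) → ℝ) (x : ℝ) : ℝ :=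
  ∑ j : Fin (m + 1), w j * x ^ (j : ℕ)
/-- A continuous function `φ` on an open set `U ⊆ ℂ` is subharmonic if it satisfies the
sub-mean value inequality on every closed disc contained in `U`. -/
def SubharmonicOn (φ : ℂ → ℝ) (U : Set ℂ) : Prop :=
  ContinuousOn φ U ∧
    ∀ lam0 : ℂ, ∀ r : ℝ, 0 < r → Metric.closedBall lam0 r ⊆ U →
      φ lam0 ≤ (1 / (2 * Real.pi)) *
        ∫ θ in (0 : ℝ)..(2 * Real.pi), φ (lam0 + (r : ℂ) * Complex.exp (θ * Complex.I))

/-! For invertible `A` one has `s_n(A)⁻¹ = ‖A⁻¹‖` in the spectral norm: diagonalising `Aᴴ * A`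
shows that `‖(Aᴴ * A)⁻¹‖ = ‖A⁻¹‖²` is the inverse of its least eigenvalue `s_n(A)²`. Hence
`λ ↦ s_n(λ)⁻¹` is the norm of the holomorphic matrix-valued function `λ ↦ P(λ)⁻¹`, and the norm of
a holomorphic function is subharmonic: by the mean value property `‖f c‖` is the norm of the
average of `f` over a circle, which is at most the average of `‖f‖`. -/

open Metric Real
open scoped ComplexOrder
open scoped Matrix.Norms.L2Operator

theorem Tuple.apply_sort_zero_le {α : Type*} [LinearOrder α] {N : ℕ} (f : Fin (N + 1) → α)
    (i : Fin (N + 1)) : f (Tuple.sort f 0) ≤ f i := by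
  rw [← Equiv.apply_symm_apply (Tuple.sort f) i]
  exact Tuple.monotone_sort f (Fin.zero_le _)

theorem norm_pi_eq_of_forall_le {ι : Type*} [Fintype ι] {E : Type*} [SeminormedAddCommGroup E]
    {v : ι → E} {i₀ : ι} (h : ∀ i, ‖v i‖ ≤ ‖v i₀‖) : ‖v‖ = ‖v i₀‖ :=
  le_antisymm ((pi_norm_le_iff_of_nonneg (norm_nonneg _)).mpr h) (norm_le_pi_norm v i₀)

namespace Matrix

variable {𝕜 : Type*} [RCLike 𝕜] {ι : Type*} [Fintype ι] [DecidableEq ι]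

theorem PosDef.l2_opNorm_inv {B : Matrix ι ι 𝕜} (hB : B.PosDef) {i₀ : ι}
    (hmin : ∀ i, hB.1.eigenvalues i₀ ≤ hB.1.eigenvalues i) :
    ‖B⁻¹‖ = (hB.1.eigenvalues i₀)⁻¹ := by
  set μ := hB.1.eigenvalues
  set U := hB.1.eigenvectorUnitary
  have hμ : ∀ i, 0 < μ i := hB.eigenvalues_pos
  have hinv : B⁻¹ = Unitary.conjStarAlgAut 𝕜 _ U (diagonal fun i => ((μ i : 𝕜))⁻¹) := by
    refine inv_eq_right_inv ?_
    conv_lhs => rw [hB.1.spectral_theorem]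
    rw [← map_mul, diagonal_mul_diagonal, ← map_one (Unitary.conjStarAlgAut 𝕜 _ U),
      ← diagonal_one]
    congr 2 with i
    exact mul_inv_cancel₀ (RCLike.ofReal_ne_zero.mpr (hμ i).ne')
  rw [hinv, Unitary.conjStarAlgAut_apply, CStarRing.norm_mul_mem_unitary _ (Unitary.star_mem U.2),
    CStarRing.norm_mem_unitary_mul _ U.2, l2_opNorm_diagonal,
    norm_pi_eq_of_forall_le (i₀ := i₀)]
  · simp [abs_of_pos (hμ i₀)]
  · intro i
    simp only [norm_inv, RCLike.norm_ofReal, abs_of_pos (hμ _)]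
    exact inv_anti₀ (hμ i₀) (hmin i)

end Matrix

theorem sMin_inv_eq_l2_opNorm_inv {N : ℕ} {A : Matrix (Fin (N + 1)) (Fin (N + 1)) ℂ}
    (hA : IsUnit A.det) : (sMin A)⁻¹ = ‖A⁻¹‖ := by
  have hpos : (Aᴴ * A).PosDef := .conjTranspose_mul_self A <|
    mulVec_injective_iff_isUnit.mpr ((isUnit_iff_isUnit_det A).mpr hA)
  set μ := hpos.1.eigenvalues
  have hsMin : sMin A = √(μ (Tuple.sort μ 0)) := by
    rw [sMin, svals, Fin.rev_last]
  have hnorm : ‖A⁻¹‖ * ‖A⁻¹‖ = (μ (Tuple.sort μ 0))⁻¹ := by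
    have hinv : (Aᴴ * A)⁻¹ = (A⁻¹)ᴴᴴ * (A⁻¹)ᴴ := by
      rw [Matrix.mul_inv_rev, conjTranspose_conjTranspose, conjTranspose_nonsing_inv]
    rw [← hpos.l2_opNorm_inv (Tuple.apply_sort_zero_le μ), hinv,
      l2_opNorm_conjTranspose_mul_self, l2_opNorm_conjTranspose]
  rw [hsMin, ← Real.sqrt_inv, ← hnorm, Real.sqrt_mul_self (norm_nonneg _)]

theorem norm_circleAverage_le {E : Type*} [NormedAddCommGroup E] [NormedSpace ℝ E]
    (f : ℂ → E) (c : ℂ) (R : ℝ) :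
    ‖circleAverage f c R‖ ≤ circleAverage (‖f ·‖) c R := by
  rw [circleAverage_def, circleAverage_def, norm_smul, smul_eq_mul,
    Real.norm_of_nonneg (by positivity)]
  gcongr
  exact intervalIntegral.norm_integral_le_integral_norm Real.two_pi_pos.le

theorem norm_le_circleAverage_norm {E : Type*} [NormedAddCommGroup E] [NormedSpace ℂ E]
    [CompleteSpace E] {f : ℂ → E} {c : ℂ} {R : ℝ} (hf : DiffContOnCl ℂ f (ball c |R|)) :
    ‖f c‖ ≤ circleAverage (‖f ·‖) c R :=
  hf.circleAverage ▸ norm_circleAverage_le f c R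

theorem SubharmonicOn.congr {φ ψ : ℂ → ℝ} {U : Set ℂ} (hφ : SubharmonicOn φ U)
    (h : Set.EqOn φ ψ U) : SubharmonicOn ψ U := by
  refine ⟨hφ.1.congr h.symm, fun c r hr hsub => ?_⟩
  have hcircle (θ : ℝ) : c + r * Complex.exp (θ * Complex.I) ∈ U :=
    hsub (circleMap_mem_closedBall c hr.le θ)
  rw [← h (hsub (mem_closedBall_self hr.le))]
  simpa only [h (hcircle _)] using hφ.2 c r hr hsub

theorem subharmonicOn_norm {E : Type*} [NormedAddCommGroup E] [NormedSpace ℂ E]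
    [CompleteSpace E] {f : ℂ → E} {U : Set ℂ} (hf : DifferentiableOn ℂ f U) :
    SubharmonicOn (‖f ·‖) U := by
  refine ⟨hf.continuousOn.norm, fun c r hr hsub => ?_⟩
  have hf' : DiffContOnCl ℂ f (ball c |r|) := by
    rw [abs_of_pos hr]
    exact (hf.mono ((closure_ball c hr.ne').symm ▸ hsub)).diffContOnCl
  simpa only [one_div, circleAverage_def, circleMap, smul_eq_mul]
    using norm_le_circleAverage_norm hf'

theorem differentiable_polyEval {N m : ℕ} (P : Fin (m + 1) → Matrix (Fin N) (Fin N) ℂ) :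
    Differentiable ℂ (polyEval P) := by
  unfold polyEval
  fun_prop

theorem stmt3_general {n m : ℕ} (P : Fin (m + 1) → Matrix (Fin (n + 1)) (Fin (n + 1)) ℂ)
    (U : Set ℂ) (hinv : ∀ lam ∈ U, IsUnit (polyEval P lam).det) :
    SubharmonicOn (fun lam => (sMin (polyEval P lam))⁻¹) U := by
  have hdiff : DifferentiableOn ℂ (fun z => (polyEval P z)⁻¹) U := by
    simp_rw [nonsing_inv_eq_ringInverse]
    exact (differentiable_polyEval P).differentiableOn.inverse
      fun z hz => (isUnit_iff_isUnit_det _).mpr (hinv z hz)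
  exact (subharmonicOn_norm hdiff).congr fun z hz =>
    (sMin_inv_eq_l2_opNorm_inv (hinv z hz)).symm

/-- If the matrix polynomial `P` is invertible at every point of an open
set `U`, then `λ ↦ s_n(λ)⁻¹` is subharmonic on `U`. -/
theorem stmt3 {n m : ℕ} (P : Fin (m + 1) → Matrix (Fin (n + 1)) (Fin (n + 1)) ℂ)
    (U : Set ℂ) (hU : IsOpen U) (hinv : ∀ lam ∈ U, IsUnit (polyEval P lam).det) :
    SubharmonicOn (fun lam => (sMin (polyEval P lam))⁻¹) U :=
  stmt3_general P U hinv
end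

section
/- Suppose A and E are n×n complex matrices such that det A ≠ 0 and det(A+E) ≠ 0. Then there is a continuous map t ↦ E(t) ∈ ℂ^{n×n}, t ∈ [0,1], such that E(0) = 0, E(1) = E, and for all t ∈ [0,1], det(A + E(t)) ≠ 0 and ‖E(t)‖ ≤ ‖E‖. -/
/-!
`z ↦ det (A + z • E)` is a polynomial that does not vanish at `0` and `1`, so it has finitely
many zeros. The arcs `t ↦ t + i s t (1 - t)`, `s ∈ [0, 1]`, join `0` to `1` inside the closed
unit disc and pairwise meet only at their endpoints, so all but finitely many of them avoid those
zeros. Scaling `E` along such an arc gives the path, and `‖γ t • E‖ = |γ t| ‖E‖ ≤ ‖E‖`.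
-/

open Matrix Finset

open Polynomial in
theorem eval_det_map_C_add_X_smul {n R : Type*} [Fintype n] [DecidableEq n] [CommRing R]
    (A E : Matrix n n R) (z : R) :
    (A.map C + (X : R[X]) • E.map C).det.eval z = (A + z • E).det := by
  rw [← coe_evalRingHom, RingHom.map_det]
  congr 1
  ext i j
  simp [mul_comm (E _ _)]

theorem finite_setOf_det_add_smul_eq_zero {n K : Type*} [Fintype n] [DecidableEq n] [Field K]
    {A : Matrix n n K} (hA : A.det ≠ 0) (E : Matrix n n K) :
    {z : K | (A + z • E).det = 0}.Finite := by
  set p := (A.map Polynomial.C + (Polynomial.X : Polynomial K) • E.map Polynomial.C).det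
  have hp : ∀ z, p.eval z = (A + z • E).det := eval_det_map_C_add_X_smul A E
  have hp_ne : p ≠ 0 := fun h => hA (by simpa [h] using (hp 0).symm)
  simpa only [Polynomial.IsRoot, hp] using Polynomial.finite_setOfPred_isRoot hp_ne

theorem specNorm_smul {N : ℕ} (a : ℂ) (M : Matrix (Fin N) (Fin N) ℂ) :
    specNorm (a • M) = ‖a‖ * specNorm M := by
  rw [specNorm, specNorm, map_smul, norm_smul]

def bentSegment (s t : ℝ) : ℂ := t + (s * t * (1 - t) : ℝ) * Complex.I

theorem continuous_bentSegment (s : ℝ) : Continuous (bentSegment s) := by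
  unfold bentSegment; fun_prop

theorem re_bentSegment (s t : ℝ) : (bentSegment s t).re = t := by
  simp [bentSegment]

theorem im_bentSegment (s t : ℝ) : (bentSegment s t).im = s * t * (1 - t) := by
  simp [bentSegment]

theorem bentSegment_zero_right (s : ℝ) : bentSegment s 0 = 0 := by
  simp [bentSegment]

theorem bentSegment_one_right (s : ℝ) : bentSegment s 1 = 1 := by
  simp [bentSegment]

theorem norm_bentSegment_le_one {s t : ℝ} (hs : s ∈ Set.Icc (0 : ℝ) 1)
    (ht : t ∈ Set.Icc (0 : ℝ) 1) : ‖bentSegment s t‖ ≤ 1 := by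
  obtain ⟨hs0, hs1⟩ := hs
  obtain ⟨ht0, ht1⟩ := ht
  rw [← sq_le_one_iff₀ (norm_nonneg _), Complex.sq_norm, bentSegment,
    Complex.normSq_add_mul_I]
  have hu : 0 ≤ t * (1 - t) := mul_nonneg ht0 (sub_nonneg.2 ht1)
  calc t ^ 2 + (s * t * (1 - t)) ^ 2
      ≤ t ^ 2 + (t * (1 - t)) ^ 2 := by
        gcongr t ^ 2 + ?_ ^ 2
        simpa only [mul_assoc, one_mul] using mul_le_mul_of_nonneg_right hs1 hu
    _ ≤ 1 := by nlinarith [mul_nonneg (mul_nonneg ht0 ht0) (sub_nonneg.2 ht1)]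

theorem subsingleton_setOf_bentSegment_eq {z : ℂ} (h0 : z ≠ 0) (h1 : z ≠ 1) :
    {s | ∃ t, bentSegment s t = z}.Subsingleton := by
  rintro s₁ ⟨t, rfl⟩ s₂ ⟨t₂, h⟩
  obtain rfl : t = t₂ := by simpa only [re_bentSegment] using (congrArg Complex.re h).symm
  have ht0 : t ≠ 0 := by rintro rfl; exact h0 (bentSegment_zero_right s₁)
  have ht1 : 1 - t ≠ 0 := by
    rw [sub_ne_zero]; rintro rfl; exact h1 (bentSegment_one_right s₁)
  have him := congrArg Complex.im h
  simp only [im_bentSegment, mul_assoc] at him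
  exact (mul_right_cancel₀ (mul_ne_zero ht0 ht1) him).symm

theorem exists_path_avoiding_finite {S : Set ℂ} (hS : S.Finite) (h0 : (0 : ℂ) ∉ S)
    (h1 : (1 : ℂ) ∉ S) :
    ∃ γ : ℝ → ℂ, Continuous γ ∧ γ 0 = 0 ∧ γ 1 = 1 ∧
      ∀ t ∈ Set.Icc (0 : ℝ) 1, ‖γ t‖ ≤ 1 ∧ γ t ∉ S := by
  have hbad : (⋃ z ∈ S, {s | ∃ t, bentSegment s t = z}).Finite :=
    hS.biUnion fun z hz => (subsingleton_setOf_bentSegment_eq (ne_of_mem_of_not_mem hz h0)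
      (ne_of_mem_of_not_mem hz h1)).finite
  obtain ⟨s, hs, hsbad⟩ := ((Set.Icc_infinite zero_lt_one).sdiff hbad).nonempty
  refine ⟨bentSegment s, continuous_bentSegment s, bentSegment_zero_right s,
    bentSegment_one_right s, fun t ht => ⟨norm_bentSegment_le_one hs ht, fun hS => ?_⟩⟩
  exact hsbad (Set.mem_biUnion hS ⟨t, rfl⟩)

/-- If `det A ≠ 0` and `det (A+E) ≠ 0`, there is a continuous path
`E(t)` from `0` to `E` along which `A + E(t)` stays nonsingular and `‖E(t)‖ ≤ ‖E‖`. -/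
theorem stmt5 {n : ℕ} (A E : Matrix (Fin n) (Fin n) ℂ)
    (hA : A.det ≠ 0) (hAE : (A + E).det ≠ 0) :
    ∃ f : ℝ → Matrix (Fin n) (Fin n) ℂ,
      ContinuousOn f (Set.Icc 0 1) ∧ f 0 = 0 ∧ f 1 = E ∧
        ∀ t ∈ Set.Icc (0 : ℝ) 1, (A + f t).det ≠ 0 ∧ specNorm (f t) ≤ specNorm E := by
  obtain ⟨γ, hγ, hγ0, hγ1, hγS⟩ := exists_path_avoiding_finite
    (finite_setOf_det_add_smul_eq_zero hA E) (by simpa using hA) (by simpa using hAE)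
  refine ⟨fun t => γ t • E, (hγ.smul continuous_const).continuousOn, by simp [hγ0],
    by simp [hγ1], fun t ht => ⟨(hγS t ht).2, ?_⟩⟩
  rw [specNorm_smul]
  exact mul_le_of_le_one_left (norm_nonneg _) (hγS t ht).1
end

section
/- Let P(λ) be an n×n matrix polynomial, and let μ be an eigenvalue of P with left eigenvector u (i.e., u ≠ 0 and u* P(μ) = 0) and right eigenvector v (i.e., v ≠ 0 and P(μ)v = 0). If u* P'(μ) v = 0, where P'(λ) is the derivative of P(λ), then μ is a multiple eigenvalue of P(λ), i.e., μ is a zero of det P(λ) of multiplicity at least 2. -/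
open Matrix Finset

/-! Pick `i`, `j` with `v i ≠ 0` and `u j ≠ 0`. Replacing column `i` of `P(λ)` by `P(λ) v` and
then row `j` by `u* P(λ)` multiplies the determinant by the nonzero constant `conj (u j) * v i`.
In the new matrix column `i` and row `j` vanish at `μ`, so are divisible by `λ - μ`, and their
common entry `u* P(λ) v` is divisible by `(λ - μ)²`, since its derivative at `μ` is
`u* P'(μ) v = 0`. This forces `(λ - μ)²` to divide the determinant. -/

open Polynomial

namespace Polynomial

variable {R : Type*} [CommRing R]

theorem sq_dvd_of_isRoot_of_isRoot_derivative {p : R[X]} {a : R} (h : p.IsRoot a)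
    (h' : (derivative p).IsRoot a) : (X - C a) ^ 2 ∣ p := by
  obtain ⟨q, rfl⟩ := dvd_iff_isRoot.mpr h
  have hq : q.IsRoot a := by simpa [derivative_mul] using h'
  rw [sq]
  exact mul_dvd_mul_left _ (dvd_iff_isRoot.mpr hq)

variable {m n : Type*}

theorem eval_mulVec_C [Fintype n] (M : Matrix m n R[X]) (v : n → R) (a : R) (k : m) :
    ((M *ᵥ (C ∘ v)) k).eval a = (M.map (eval a) *ᵥ v) k := by
  simpa [Function.comp_def] using RingHom.map_mulVec (evalRingHom a) M (C ∘ v) k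

theorem eval_vecMul_C [Fintype m] (M : Matrix m n R[X]) (w : m → R) (a : R) (k : n) :
    (((C ∘ w) ᵥ* M) k).eval a = (w ᵥ* M.map (eval a)) k := by
  simpa [Function.comp_def] using RingHom.map_vecMul (evalRingHom a) M (C ∘ w) k

theorem eval_dotProduct_mulVec_C [Fintype m] [Fintype n] (M : Matrix m n R[X]) (w : m → R)
    (v : n → R) (a : R) : ((C ∘ w) ⬝ᵥ M *ᵥ (C ∘ v)).eval a = w ⬝ᵥ M.map (eval a) *ᵥ v := by
  simp [dotProduct, eval_finsetSum, eval_mulVec_C]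

theorem derivative_dotProduct_mulVec_C [Fintype m] [Fintype n] (M : Matrix m n R[X])
    (w : m → R) (v : n → R) :
    derivative ((C ∘ w) ⬝ᵥ M *ᵥ (C ∘ v)) = (C ∘ w) ⬝ᵥ M.map derivative *ᵥ (C ∘ v) := by
  simp [dotProduct, mulVec, derivative_mul]

end Polynomial

namespace Matrix

variable {R : Type*} [CommRing R] {ι : Type*} [Fintype ι] [DecidableEq ι]

theorem sq_dvd_det_of_dvd_row_of_dvd_col {d : R} {N : Matrix ι ι R} {i j : ι}
    (hrow : ∀ k, d ∣ N i k) (hcol : ∀ k, d ∣ N k j) (hij : d ^ 2 ∣ N i j) :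
    d ^ 2 ∣ N.det := by
  rw [det_apply']
  refine Finset.dvd_sum fun σ _ => dvd_mul_of_dvd_right ?_ _
  by_cases hσ : σ j = i
  · exact (hσ ▸ hij).trans (Finset.dvd_prod_of_mem _ (Finset.mem_univ j))
  · have hne : j ≠ σ.symm i := fun h => hσ (by rw [h, Equiv.apply_symm_apply])
    calc d ^ 2 = d * d := sq d
      _ ∣ N (σ j) j * N (σ (σ.symm i)) (σ.symm i) :=
          mul_dvd_mul (hcol _) (by rw [Equiv.apply_symm_apply]; exact hrow _)
      _ = ∏ k ∈ {j, σ.symm i}, N (σ k) k := (prod_pair (f := fun k => N (σ k) k) hne).symm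
      _ ∣ ∏ k, N (σ k) k := Finset.prod_dvd_prod_of_subset _ _ _ (Finset.subset_univ _)

theorem det_updateCol_mulVec (A : Matrix ι ι R) (j : ι) (c : ι → R) :
    (A.updateCol j (A *ᵥ c)).det = c j * A.det := by
  rw [← smul_eq_mul, ← det_updateCol_sum]
  congr
  ext k
  simp [mulVec, dotProduct, mul_comm]

theorem det_updateRow_vecMul (A : Matrix ι ι R) (j : ι) (c : ι → R) :
    (A.updateRow j (c ᵥ* A)).det = c j * A.det := by
  rw [← smul_eq_mul, ← det_updateRow_sum]
  congr
  ext k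
  simp [vecMul, dotProduct]

end Matrix

theorem sq_dvd_det_of_eigenvectors {K ι : Type*} [Field K] [Fintype ι] [DecidableEq ι]
    (M : Matrix ι ι K[X]) (a : K) {w v : ι → K} (hw : w ≠ 0) (hv : v ≠ 0)
    (hwM : w ᵥ* M.map (eval a) = 0) (hMv : M.map (eval a) *ᵥ v = 0)
    (hwM'v : w ⬝ᵥ (M.map derivative).map (eval a) *ᵥ v = 0) :
    (X - C a) ^ 2 ∣ M.det := by
  obtain ⟨i, hi⟩ := Function.ne_iff.mp hv
  obtain ⟨j, hj⟩ := Function.ne_iff.mp hw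
  set M₁ := M.updateCol i (M *ᵥ (C ∘ v))
  set N := M₁.updateRow j ((C ∘ w) ᵥ* M₁)
  have hdet : N.det = C (w j) * (C (v i) * M.det) := by
    rw [det_updateRow_vecMul, det_updateCol_mulVec]; rfl
  have hcorner : N j i = (C ∘ w) ⬝ᵥ M *ᵥ (C ∘ v) := by
    simp [N, M₁, vecMul, dotProduct]
  have hcorner_dvd : (X - C a) ^ 2 ∣ N j i := by
    rw [hcorner]
    refine sq_dvd_of_isRoot_of_isRoot_derivative ?_ ?_
    · simp [IsRoot, eval_dotProduct_mulVec_C, hMv]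
    · simpa [IsRoot, derivative_dotProduct_mulVec_C, eval_dotProduct_mulVec_C] using hwM'v
  have hrow : ∀ k, X - C a ∣ N j k := by
    intro k
    rcases eq_or_ne k i with rfl | hk
    · exact (dvd_pow_self _ two_ne_zero).trans hcorner_dvd
    · have hNjk : N j k = ((C ∘ w) ᵥ* M) k := by simp [N, M₁, vecMul, dotProduct, hk]
      rw [dvd_iff_isRoot, IsRoot, hNjk, eval_vecMul_C, hwM, Pi.zero_apply]
  have hcol : ∀ k, X - C a ∣ N k i := by
    intro k
    rcases eq_or_ne k j with rfl | hk
    · exact (dvd_pow_self _ two_ne_zero).trans hcorner_dvd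
    · have hNki : N k i = (M *ᵥ (C ∘ v)) k := by simp [N, M₁, hk]
      rw [dvd_iff_isRoot, IsRoot, hNki, eval_mulVec_C, hMv, Pi.zero_apply]
  have hN := sq_dvd_det_of_dvd_row_of_dvd_col hrow hcol hcorner_dvd
  rwa [hdet, (isUnit_C.mpr hj.isUnit).dvd_mul_left, (isUnit_C.mpr hi.isUnit).dvd_mul_left] at hN

section MatrixPolynomial

variable {n m : ℕ} (P : Fin (m + 1) → Matrix (Fin n) (Fin n) ℂ)

theorem map_eval_sum_X_pow_smul (μ : ℂ) :
    (∑ j : Fin (m + 1), (X : ℂ[X]) ^ (j : ℕ) • (P j).map C).map (eval μ) = polyEval P μ := by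
  ext i k
  simp [polyEval, Matrix.sum_apply, eval_finsetSum, -X_pow_mul_C]

theorem map_eval_map_derivative_sum_X_pow_smul (μ : ℂ) :
    ((∑ j : Fin (m + 1), (X : ℂ[X]) ^ (j : ℕ) • (P j).map C).map derivative).map (eval μ) =
      polyDerivEval P μ := by
  ext i k
  simp [polyDerivEval, Matrix.sum_apply, eval_finsetSum, derivative_X_pow, -X_pow_mul_C,
    mul_right_comm _ (P _ _ _)]

end MatrixPolynomial

/-- If `u`, `v` are left and right eigenvectors of the matrix polynomial
`P` at `μ` and `u* P'(μ) v = 0`, then `μ` is a zero of `det P(λ)` of multiplicity ≥ 2. -/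
theorem stmt6 {n m : ℕ} (P : Fin (m + 1) → Matrix (Fin n) (Fin n) ℂ) (μ : ℂ)
    (u v : Fin n → ℂ) (hu : u ≠ 0) (hv : v ≠ 0)
    (hul : Matrix.vecMul (star u) (polyEval P μ) = 0)
    (hvr : (polyEval P μ).mulVec v = 0)
    (horth : dotProduct (star u) ((polyDerivEval P μ).mulVec v) = 0) :
    (Polynomial.X - Polynomial.C μ) ^ 2 ∣
      (∑ j : Fin (m + 1),
        ((Polynomial.X : Polynomial ℂ) ^ (j : ℕ)) • (P j).map Polynomial.C :
          Matrix (Fin n) (Fin n) (Polynomial ℂ)).det := by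
  refine sq_dvd_det_of_eigenvectors _ μ (star_ne_zero.mpr hu) hv ?_ ?_ ?_
  · rwa [map_eval_sum_X_pow_smul]
  · rwa [map_eval_sum_X_pow_smul]
  · rwa [map_eval_map_derivative_sum_X_pow_smul]
end

section
/- Let P(λ) be an n×n matrix polynomial with nonsingular leading coefficient and weight w, and assume ε w_m < ‖P_m⁻¹‖⁻¹ so that every Q ∈ B(P,ε,w) has nonsingular leading coefficient. Then the ε-pseudospectrum Λ_ε(P) is a bounded subset of ℂ. -/
open Matrix Finset

/-! A matrix polynomial with invertible leading coefficient `P_m` has no eigenvalues of large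
modulus, and this is stable under perturbations: writing `Q(μ) = μ^m (P_m + Y)`, the remainder
`Y = Δ_m + μ^{-m} Σ_{j<m} μ^j (P_j + Δ_j)` has norm at most `ε w_m + O(1/|μ|)`, which is below
`‖P_m⁻¹‖⁻¹` for `|μ|` large, uniformly in the admissible `Δ`; then `P_m + Y` is invertible by the
Neumann series. -/

open Filter Bornology
-- With this norm on matrices, `specNorm A` and `‖A‖` agree definitionally.
open scoped Matrix.Norms.L2Operator

section PolynomialEval

variable {𝕜 : Type*} [NormedField 𝕜]

theorem norm_inv_pow_smul_sum_pow_smul_le {E : Type*} [SeminormedAddCommGroup E]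
    [NormedSpace 𝕜 E] {m : ℕ} (q : Fin m → E) {μ : 𝕜} (hμ : 1 ≤ ‖μ‖) :
    ‖(μ ^ m)⁻¹ • ∑ i : Fin m, μ ^ (i : ℕ) • q i‖ ≤ ‖μ‖⁻¹ * ∑ i, ‖q i‖ := by
  have hμ0 : 0 < ‖μ‖ := one_pos.trans_le hμ
  rw [Finset.smul_sum, Finset.mul_sum]
  refine (norm_sum_le _ _).trans (Finset.sum_le_sum fun i _ => ?_)
  rw [smul_smul, norm_smul, norm_mul, norm_inv, norm_pow, norm_pow, inv_mul_eq_div]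
  gcongr
  rw [div_le_iff₀ (by positivity), inv_mul_eq_div, le_div_iff₀ hμ0, ← pow_succ]
  exact pow_le_pow_right₀ hμ i.isLt

variable {A : Type*} [NormedRing A] [NormedAlgebra 𝕜 A] [HasSummableGeomSeries A]

theorem isUnit_sum_pow_smul_of_norm_lt {m : ℕ} (p : Fin (m + 1) → A) (u : Aˣ) {μ : 𝕜}
    (hμ : 1 ≤ ‖μ‖)
    (h : ‖p (Fin.last m) - u‖ + ‖μ‖⁻¹ * ∑ i : Fin m, ‖p i.castSucc‖ < ‖(↑u⁻¹ : A)‖⁻¹) :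
    IsUnit (∑ j : Fin (m + 1), μ ^ (j : ℕ) • p j) := by
  have hμm : μ ^ m ≠ 0 := pow_ne_zero m (norm_pos_iff.1 (one_pos.trans_le hμ))
  set y := p (Fin.last m) - u + (μ ^ m)⁻¹ • ∑ i : Fin m, μ ^ (i : ℕ) • p i.castSucc
  have hy : ‖y‖ < ‖(↑u⁻¹ : A)‖⁻¹ :=
    (norm_add_le _ _).trans_lt <| by
      linarith [norm_inv_pow_smul_sum_pow_smul_le (fun i => p i.castSucc) hμ]
  have hfactor : ∑ j : Fin (m + 1), μ ^ (j : ℕ) • p j =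
      Units.mk0 (μ ^ m) hμm • (↑(u.add y hy) : A) := by
    rw [Units.val_add, Units.smul_mk0, smul_add, smul_add, smul_inv_smul₀ hμm,
      Fin.sum_univ_castSucc]
    simp only [Fin.val_castSucc, Fin.val_last, smul_sub]
    abel
  rw [hfactor]
  exact (u.add y hy).isUnit.smul _

end PolynomialEval

theorem stmt14_general {n m : ℕ} (P : Fin (m + 1) → Matrix (Fin (n + 1)) (Fin (n + 1)) ℂ)
    (hPm : (P (Fin.last m)).det ≠ 0)
    (w : Fin (m + 1) → ℝ)
    (ε : ℝ)
    (hbound : ε * w (Fin.last m) < (specNorm (P (Fin.last m))⁻¹)⁻¹) :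
    Bornology.IsBounded
      {μ : ℂ | ∃ Δ : Fin (m + 1) → Matrix (Fin (n + 1)) (Fin (n + 1)) ℂ,
        (∀ j, specNorm (Δ j) ≤ ε * w j) ∧
          (∑ j : Fin (m + 1), μ ^ (j : ℕ) • (P j + Δ j)).det = 0} := by
  have hunit : IsUnit (P (Fin.last m)) :=
    (Matrix.isUnit_iff_isUnit_det _).2 (isUnit_iff_ne_zero.2 hPm)
  have hinv : (↑hunit.unit⁻¹ : Matrix _ _ ℂ) = (P (Fin.last m))⁻¹ := by
    rw [Matrix.coe_units_inv, IsUnit.unit_spec]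
  set C := ∑ i : Fin m, (‖P i.castSucc‖ + ε * w i.castSucc)
  have hlim : Tendsto (fun μ : ℂ => ε * w (Fin.last m) + ‖μ‖⁻¹ * C) (cobounded ℂ)
      (nhds (ε * w (Fin.last m))) := by
    simpa using (tendsto_norm_cobounded_atTop.inv_tendsto_atTop.mul_const C).const_add
      (ε * w (Fin.last m))
  rw [isBounded_def]
  filter_upwards [tendsto_norm_cobounded_atTop.eventually_ge_atTop 1,
    hlim.eventually_lt_const hbound] with μ hμ hsmall
  rintro ⟨Δ, hΔ, hdet⟩
  have hC : ∑ i : Fin m, ‖P i.castSucc + Δ i.castSucc‖ ≤ C :=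
    Finset.sum_le_sum fun i _ => (norm_add_le _ _).trans (add_le_add_right (hΔ _) _)
  have hQ := isUnit_sum_pow_smul_of_norm_lt (fun j => P j + Δ j) hunit.unit hμ <| by
    rw [hinv, IsUnit.unit_spec, add_sub_cancel_left]
    calc ‖Δ (Fin.last m)‖ + ‖μ‖⁻¹ * ∑ i : Fin m, ‖P i.castSucc + Δ i.castSucc‖
        ≤ ε * w (Fin.last m) + ‖μ‖⁻¹ * C := by gcongr; exact hΔ _
      _ < _ := hsmall
  rw [Matrix.isUnit_iff_isUnit_det, hdet] at hQ
  exact not_isUnit_zero hQ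

/-- If `ε w_m < ‖P_m⁻¹‖⁻¹`, then the pseudospectrum `Λ_ε(P)` (defined
via the admissible perturbations `B(P,ε,w)`) is bounded. -/
theorem stmt14 {n m : ℕ} (P : Fin (m + 1) → Matrix (Fin (n + 1)) (Fin (n + 1)) ℂ)
    (hPm : (P (Fin.last m)).det ≠ 0)
    (w : Fin (m + 1) → ℝ) (hw : ∀ j, 0 ≤ w j) (hw0 : 0 < w 0)
    (ε : ℝ) (hε : 0 ≤ ε)
    (hbound : ε * w (Fin.last m) < (specNorm (P (Fin.last m))⁻¹)⁻¹) :
    Bornology.IsBounded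
      {μ : ℂ | ∃ Δ : Fin (m + 1) → Matrix (Fin (n + 1)) (Fin (n + 1)) ℂ,
        (∀ j, specNorm (Δ j) ≤ ε * w j) ∧
          (∑ j : Fin (m + 1), μ ^ (j : ℕ) • (P j + Δ j)).det = 0} :=
  stmt14_general P hPm w ε hbound
end

section
/- For every ε > 0, every connected component of the ε-pseudospectrum Λ_ε(P) of an n×n matrix polynomial P has non-empty interior. Equivalently, no connected component of Λ_ε(P) is a single point or a set with empty interior. -/
open Matrix Finset

/-!
Where `s_n(P(x)) < ε w(|x|)` a whole disc around `x` lies in `Λ_ε(P)`. At a point with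
`s_n(P(x)) = ε w(|x|) > 0`, the matrix `P(x)` is invertible. Take a unit vector `v` with
`|P(x) v| = s_n(P(x))`, put `u = P(x) v / s_n(P(x))`, and let `W(z) = Σ w_j (z e^{-i arg x})^j`,
an entire function with `|W(z)| ≤ w(|z|)` and `W(x) = w(|x|)`. Then `f(z) = W(z) ⟨v, P(z)⁻¹ u⟩`
is analytic near `x`, `s_n(P(z)) |f(z)| ≤ w(|z|)` everywhere and `|f(x)| = 1/ε`, so
`{|f| ≥ 1/ε} ⊆ Λ_ε(P)`. Either `f` is constant near `x`, and a disc around `x` lies in `Λ_ε(P)`,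
or, writing `f(z) = f(x) + (z - x)^k g(z)`, `|f|` increases strictly along a short segment
leaving `x`; that segment lies in `Λ_ε(P)` and ends in the open set where
`s_n(P(z)) < ε w(|z|)`. Either way the component of `x` contains an interior point of
`Λ_ε(P)`, hence an open disc.
-/

open scoped MatrixOrder ComplexOrder Matrix.Norms.L2Operator InnerProductSpace Topology
open Filter

section SingularValue

variable {N : ℕ}

lemma norm_toEuclideanCLM_apply_sq (A : Matrix (Fin N) (Fin N) ℂ) (v : EuclideanSpace ℂ (Fin N)) :
    ‖toEuclideanCLM (𝕜 := ℂ) A v‖ ^ 2 = RCLike.re ⟪v, toEuclideanCLM (𝕜 := ℂ) (Aᴴ * A) v⟫_ℂ := by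
  rw [map_mul, ← star_eq_conjTranspose, map_star, ContinuousLinearMap.star_eq_adjoint,
    mul_apply_eq_comp, ContinuousLinearMap.adjoint_inner_right,
    inner_self_eq_norm_sq]

lemma eigenvalues_sort_zero_eq_sMin_sq (A : Matrix (Fin (N + 1)) (Fin (N + 1)) ℂ) :
    (isHermitian_conjTranspose_mul_self A).eigenvalues
      (Tuple.sort (isHermitian_conjTranspose_mul_self A).eigenvalues 0) = sMin A ^ 2 := by
  rw [sMin, svals, Fin.rev_last, Real.sq_sqrt
    ((posSemidef_conjTranspose_mul_self A).eigenvalues_nonneg _)]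

lemma sMin_sq_le_eigenvalues (A : Matrix (Fin (N + 1)) (Fin (N + 1)) ℂ) (i : Fin (N + 1)) :
    sMin A ^ 2 ≤ (isHermitian_conjTranspose_mul_self A).eigenvalues i := by
  rw [← eigenvalues_sort_zero_eq_sMin_sq]
  set eig := (isHermitian_conjTranspose_mul_self A).eigenvalues
  simpa [Function.comp] using
    Tuple.monotone_sort eig (Fin.zero_le ((Tuple.sort eig).symm i))

lemma posSemidef_conjTranspose_mul_self_sub_sMin_sq (A : Matrix (Fin (N + 1)) (Fin (N + 1)) ℂ) :
    (Aᴴ * A - algebraMap ℝ _ (sMin A ^ 2)).PosSemidef := by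
  rw [← le_iff, algebraMap_le_iff_le_spectrum
    (isHermitian_conjTranspose_mul_self A).isSelfAdjoint,
    (isHermitian_conjTranspose_mul_self A).spectrum_real_eq_range_eigenvalues]
  rintro _ ⟨i, rfl⟩
  exact sMin_sq_le_eigenvalues A i

lemma sMin_nonneg (A : Matrix (Fin (N + 1)) (Fin (N + 1)) ℂ) : 0 ≤ sMin A :=
  Real.sqrt_nonneg _

lemma sMin_mul_norm_le (A : Matrix (Fin (N + 1)) (Fin (N + 1)) ℂ)
    (v : EuclideanSpace ℂ (Fin (N + 1))) :
    sMin A * ‖v‖ ≤ ‖toEuclideanCLM (𝕜 := ℂ) A v‖ := by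
  have hpos := (isPositive_toEuclideanLin_iff.mpr
    (posSemidef_conjTranspose_mul_self_sub_sMin_sq A)).re_inner_nonneg_right v
  rw [← coe_toEuclideanCLM_eq_toEuclideanLin, IsScalarTower.algebraMap_apply ℝ ℂ, map_sub,
    AlgHomClass.commutes] at hpos
  simp only [ContinuousLinearMap.toLinearMap_sub, LinearMap.sub_apply,
    ContinuousLinearMap.coe_coe, ContinuousLinearMap.algebraMap_apply] at hpos
  rw [inner_sub_right, map_sub, sub_nonneg, ← norm_toEuclideanCLM_apply_sq, inner_smul_right,
    inner_self_eq_norm_sq_to_K] at hpos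
  refine (pow_le_pow_iff_left₀ (mul_nonneg (sMin_nonneg A) (norm_nonneg v)) (norm_nonneg _)
    two_ne_zero).mp ?_
  rw [mul_pow]
  exact_mod_cast hpos

lemma exists_norm_eq_one_norm_toEuclideanCLM_eq_sMin (A : Matrix (Fin (N + 1)) (Fin (N + 1)) ℂ) :
    ∃ v : EuclideanSpace ℂ (Fin (N + 1)), ‖v‖ = 1 ∧ ‖toEuclideanCLM (𝕜 := ℂ) A v‖ = sMin A := by
  set hH := isHermitian_conjTranspose_mul_self A
  set i₀ := Tuple.sort hH.eigenvalues 0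
  refine ⟨hH.eigenvectorBasis i₀, hH.eigenvectorBasis.orthonormal.1 i₀, ?_⟩
  have hev : toEuclideanCLM (𝕜 := ℂ) (Aᴴ * A) (hH.eigenvectorBasis i₀)
      = (hH.eigenvalues i₀ : ℂ) • hH.eigenvectorBasis i₀ := by
    ext1
    rw [ofLp_toEuclideanCLM, hH.mulVec_eigenvectorBasis, WithLp.ofLp_smul,
      RCLike.real_smul_eq_coe_smul (K := ℂ)]
    rfl
  refine (pow_left_inj₀ (norm_nonneg _) (sMin_nonneg A) two_ne_zero).mp ?_
  rw [norm_toEuclideanCLM_apply_sq, hev, inner_smul_right, inner_self_eq_norm_sq_to_K,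
    hH.eigenvectorBasis.orthonormal.1 i₀, eigenvalues_sort_zero_eq_sMin_sq]
  simp [-Complex.ofReal_pow]

lemma sMin_le_add_norm_sub (A B : Matrix (Fin (N + 1)) (Fin (N + 1)) ℂ) :
    sMin A ≤ sMin B + ‖A - B‖ := by
  obtain ⟨v, hv, hBv⟩ := exists_norm_eq_one_norm_toEuclideanCLM_eq_sMin B
  calc sMin A = sMin A * ‖v‖ := by rw [hv, mul_one]
    _ ≤ ‖toEuclideanCLM (𝕜 := ℂ) A v‖ := sMin_mul_norm_le A v
    _ ≤ ‖toEuclideanCLM (𝕜 := ℂ) B v‖ + ‖toEuclideanCLM (𝕜 := ℂ) (A - B) v‖ := by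
        rw [map_sub, _root_.sub_apply]
        exact norm_le_insert' _ _
    _ ≤ sMin B + ‖A - B‖ * ‖v‖ := by
        rw [hBv]
        gcongr
        exact (toEuclideanCLM (𝕜 := ℂ) (A - B)).le_opNorm v
    _ = sMin B + ‖A - B‖ := by rw [hv, mul_one]

lemma lipschitzWith_sMin : LipschitzWith 1 (sMin (N := N)) :=
  LipschitzWith.of_le_add fun A B => by simpa [dist_eq_norm] using sMin_le_add_norm_sub A B

lemma det_ne_zero_of_sMin_pos {A : Matrix (Fin (N + 1)) (Fin (N + 1)) ℂ} (h : 0 < sMin A) :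
    A.det ≠ 0 := by
  intro hdet
  obtain ⟨v, hv, hAv⟩ := exists_mulVec_eq_zero_iff.mpr hdet
  have := sMin_mul_norm_le A (WithLp.toLp 2 v)
  rw [toEuclideanCLM_toLp, hAv, WithLp.toLp_zero, norm_zero] at this
  exact (mul_pos h (norm_pos_iff.mpr ((WithLp.toLp_eq_zero 2).not.mpr hv))).not_ge this

lemma sMin_mul_norm_inv_apply_le (A : Matrix (Fin (N + 1)) (Fin (N + 1)) ℂ)
    (u : EuclideanSpace ℂ (Fin (N + 1))) :
    sMin A * ‖toEuclideanCLM (𝕜 := ℂ) A⁻¹ u‖ ≤ ‖u‖ := by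
  by_cases hdet : IsUnit A.det
  · simpa [← mul_apply_eq_comp, ← map_mul, mul_nonsing_inv A hdet] using
      sMin_mul_norm_le A (toEuclideanCLM (𝕜 := ℂ) A⁻¹ u)
  · simp [nonsing_inv_apply_not_isUnit A hdet]

end SingularValue

section Analytic

variable {N : ℕ}

lemma analyticAt_inner_toEuclideanCLM_apply {f : ℂ → Matrix (Fin N) (Fin N) ℂ} {z : ℂ}
    (hf : AnalyticAt ℂ f z) (u v : EuclideanSpace ℂ (Fin N)) :
    AnalyticAt ℂ (fun z => ⟪v, toEuclideanCLM (𝕜 := ℂ) (f z) u⟫_ℂ) z := by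
  let L : Matrix (Fin N) (Fin N) ℂ →ₗ[ℂ] ℂ :=
    { toFun := fun M => ⟪v, toEuclideanCLM (𝕜 := ℂ) M u⟫_ℂ
      map_add' := fun M M' => by simp
      map_smul' := fun c M => by simp }
  exact (LinearMap.toContinuousLinearMap L).analyticAt _ |>.comp hf

lemma AnalyticAt.nonsing_inv {f : ℂ → Matrix (Fin N) (Fin N) ℂ} {z : ℂ} (hf : AnalyticAt ℂ f z)
    (hz : (f z).det ≠ 0) : AnalyticAt ℂ (fun z => (f z)⁻¹) z := by
  simp only [nonsing_inv_eq_ringInverse]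
  exact (analyticAt_inverse (𝕜 := ℂ) ((f z).isUnit_iff_isUnit_det.mpr hz.isUnit).unit).comp_of_eq
    hf rfl

lemma analyticAt_polyEval {m : ℕ} (P : Fin (m + 1) → Matrix (Fin N) (Fin N) ℂ) (z : ℂ) :
    AnalyticAt ℂ (polyEval P) z := by
  unfold polyEval
  fun_prop

lemma continuous_polyEval {m : ℕ} (P : Fin (m + 1) → Matrix (Fin N) (Fin N) ℂ) :
    Continuous (polyEval P) := by
  unfold polyEval
  fun_prop

end Analytic

section Weight

variable {m : ℕ} (w : Fin (m + 1) → ℝ)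

lemma wEval_pos (hw : ∀ j, 0 ≤ w j) (hw0 : 0 < w 0) {t : ℝ} (ht : 0 ≤ t) : 0 < wEval w t :=
  calc 0 < w 0 * t ^ ((0 : Fin (m + 1)) : ℕ) := by simpa using hw0
    _ ≤ wEval w t := Finset.single_le_sum (f := fun j : Fin (m + 1) => w j * t ^ (j : ℕ))
      (fun j _ => mul_nonneg (hw j) (pow_nonneg ht _)) (Finset.mem_univ 0)

lemma continuous_wEval : Continuous (wEval w) := by
  unfold wEval
  fun_prop

lemma exists_analytic_eq_wEval_norm_le (hw : ∀ j, 0 ≤ w j) (x : ℂ) :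
    ∃ W : ℂ → ℂ, AnalyticAt ℂ W x ∧ W x = wEval w ‖x‖ ∧ ∀ z, ‖W z‖ ≤ wEval w ‖z‖ := by
  set d := Complex.exp (-(x.arg : ℂ) * Complex.I)
  have hd : ‖d‖ = 1 := by simpa [d] using Complex.norm_exp_ofReal_mul_I (-x.arg)
  have hxd : x * d = ‖x‖ := by
    rw [← Complex.norm_mul_exp_arg_mul_I x]
    simp only [d]
    rw [mul_assoc, ← Complex.exp_add, neg_mul, add_neg_cancel, Complex.exp_zero, mul_one,
      Complex.norm_mul_exp_arg_mul_I]
  refine ⟨fun z => ∑ j : Fin (m + 1), (w j : ℂ) * (z * d) ^ (j : ℕ), by fun_prop, ?_, fun z => ?_⟩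
  · simp [wEval, hxd]
  · refine (norm_sum_le _ _).trans_eq (Finset.sum_congr rfl fun j _ => ?_)
    rw [norm_mul, norm_pow, norm_mul, hd, mul_one, Complex.norm_real, Real.norm_of_nonneg (hw j)]

end Weight

theorem AnalyticAt.exists_norm_lt_norm_add_real_mul {f : ℂ → ℂ} {x : ℂ} (hf : AnalyticAt ℂ f x)
    (hfx : f x ≠ 0) (hnc : ¬∀ᶠ z in 𝓝 x, f z = f x) :
    ∃ c : ℂ, ∀ t ∈ Set.Ioc (0 : ℝ) 1, ‖f x‖ < ‖f (x + t * c)‖ := by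
  obtain ⟨k, g, hg, hgx, hfg⟩ :=
    (hf.sub (analyticAt_const (v := f x))).exists_eventuallyEq_pow_smul_nonzero_iff.mpr
      (by simpa only [Pi.sub_apply, sub_eq_zero] using hnc)
  have hk : k ≠ 0 := by
    rintro rfl
    simpa [eq_comm, hgx] using hfg.self_of_nhds
  have hre : ∀ᶠ z in 𝓝 x, 0 < (g z / g x).re :=
    (Complex.continuous_re.continuousAt.comp (hg.continuousAt.div_const (g x))).eventually
      (lt_mem_nhds (by simp [hgx]))
  obtain ⟨r, hr, hball⟩ := Metric.eventually_nhds_iff.mp (hfg.and hre)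
  -- `c ^ k = f x / g x` turns the leading term `(z - x) ^ k * g z` towards `f x`.
  obtain ⟨c, hc⟩ := IsAlgClosed.exists_pow_nat_eq (f x / g x) (Nat.pos_of_ne_zero hk)
  have hc0 : c ≠ 0 := by
    rintro rfl
    exact div_ne_zero hfx hgx (by rw [← hc, zero_pow hk])
  refine ⟨(r / (2 * ‖c‖) : ℝ) * c, fun t ⟨ht0, ht1⟩ => ?_⟩
  set s : ℝ := t * (r / (2 * ‖c‖))
  have hs : 0 < s := by positivity
  set z := x + t * ((r / (2 * ‖c‖) : ℝ) * c)
  have hzx : z - x = s * c := by simp only [z, s]; push_cast; ring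
  have hdist : dist z x < r := by
    rw [dist_eq_norm, hzx, norm_mul, Complex.norm_real, Real.norm_of_nonneg hs.le]
    calc s * ‖c‖ = t * r / 2 := by simp only [s]; field_simp
      _ < r := by nlinarith
  obtain ⟨hfz, hgz⟩ := hball hdist
  have hfz' : f z = f x * (1 + (s : ℂ) ^ k * (g z / g x)) := by
    rw [Pi.sub_apply, hzx, smul_eq_mul, mul_pow, hc] at hfz
    linear_combination hfz
  have hgt : 1 < ‖1 + (s : ℂ) ^ k * (g z / g x)‖ := by
    refine lt_of_lt_of_le ?_ (Complex.re_le_norm _)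
    rw [Complex.add_re, Complex.one_re, ← Complex.ofReal_pow, Complex.re_ofReal_mul]
    have := pow_pos hs k
    nlinarith
  rw [hfz', norm_mul]
  exact lt_mul_of_one_lt_right (norm_pos_iff.mpr hfx) hgt

lemma interior_connectedComponentIn_nonempty {X : Type*} [TopologicalSpace X]
    [LocallyConnectedSpace X] {s : Set X} {x z : X} (hz : z ∈ connectedComponentIn s x)
    (hzs : z ∈ interior s) : (interior (connectedComponentIn s x)).Nonempty := by
  refine ⟨z, interior_maximal ?_ (isOpen_interior.connectedComponentIn)
    (mem_connectedComponentIn hzs)⟩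
  rw [connectedComponentIn_eq hz]
  exact connectedComponentIn_mono _ interior_subset

section Pseudospectrum

variable {n m : ℕ} (P : Fin (m + 1) → Matrix (Fin (n + 1)) (Fin (n + 1)) ℂ)
  (w : Fin (m + 1) → ℝ)

def pseudospectrum (ε : ℝ) : Set ℂ :=
  {z : ℂ | sMin (polyEval P z) ≤ ε * wEval w ‖z‖}

lemma setOf_sMin_lt_subset_interior_pseudospectrum (ε : ℝ) :
    {z : ℂ | sMin (polyEval P z) < ε * wEval w ‖z‖} ⊆ interior (pseudospectrum P w ε) :=
  interior_maximal (fun _ hz => le_of_lt (α := ℝ) hz) <| isOpen_lt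
    (lipschitzWith_sMin.continuous.comp (continuous_polyEval P))
    (continuous_const.mul ((continuous_wEval w).comp continuous_norm))

lemma exists_analyticAt_sMin_mul_norm_le (hw : ∀ j, 0 ≤ w j) {x : ℂ}
    (hx : 0 < sMin (polyEval P x)) :
    ∃ f : ℂ → ℂ, AnalyticAt ℂ f x ∧ ‖f x‖ = wEval w ‖x‖ / sMin (polyEval P x) ∧
      ∀ z, sMin (polyEval P z) * ‖f z‖ ≤ wEval w ‖z‖ := by
  set A := polyEval P x
  set s := sMin A
  obtain ⟨W, hW, hWx, hW_le⟩ := exists_analytic_eq_wEval_norm_le w hw x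
  obtain ⟨v, hv, hAv⟩ := exists_norm_eq_one_norm_toEuclideanCLM_eq_sMin A
  set u := (s : ℂ)⁻¹ • toEuclideanCLM (𝕜 := ℂ) A v
  have hu : ‖u‖ = 1 := by
    rw [norm_smul, hAv, norm_inv, Complex.norm_real, Real.norm_of_nonneg hx.le,
      inv_mul_cancel₀ hx.ne']
  have hA_inv_u : toEuclideanCLM (𝕜 := ℂ) A⁻¹ u = (s : ℂ)⁻¹ • v := by
    rw [map_smul, ← mul_apply_eq_comp, ← map_mul, nonsing_inv_mul A
      (isUnit_iff_ne_zero.mpr (det_ne_zero_of_sMin_pos hx)), map_one, one_apply_eq_self]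
  refine ⟨fun z => W z * ⟪v, toEuclideanCLM (𝕜 := ℂ) (polyEval P z)⁻¹ u⟫_ℂ,
    hW.mul (analyticAt_inner_toEuclideanCLM_apply
      ((analyticAt_polyEval P x).nonsing_inv (det_ne_zero_of_sMin_pos hx)) u v),
    ?_, fun z => ?_⟩
  · change ‖W x * ⟪v, toEuclideanCLM (𝕜 := ℂ) A⁻¹ u⟫_ℂ‖ = _
    rw [hA_inv_u, inner_smul_right, inner_self_eq_norm_sq_to_K, hv, hWx]
    simp [abs_of_nonneg ((norm_nonneg _).trans (hW_le x)), hx.le, div_eq_mul_inv]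
  · set R := toEuclideanCLM (𝕜 := ℂ) (polyEval P z)⁻¹ u
    have hR : sMin (polyEval P z) * ‖⟪v, R⟫_ℂ‖ ≤ 1 :=
      calc sMin (polyEval P z) * ‖⟪v, R⟫_ℂ‖ ≤ sMin (polyEval P z) * ‖R‖ :=
            mul_le_mul_of_nonneg_left ((norm_inner_le_norm v R).trans_eq (by rw [hv, one_mul]))
              (sMin_nonneg _)
        _ ≤ 1 := hu ▸ sMin_mul_norm_inv_apply_le (polyEval P z) u
    calc sMin (polyEval P z) * ‖W z * ⟪v, R⟫_ℂ‖ = ‖W z‖ * (sMin (polyEval P z) * ‖⟪v, R⟫_ℂ‖) := by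
          rw [norm_mul, mul_left_comm]
      _ ≤ wEval w ‖z‖ * 1 :=
          mul_le_mul (hW_le z) hR (mul_nonneg (sMin_nonneg _) (norm_nonneg _))
            ((norm_nonneg _).trans (hW_le z))
      _ = wEval w ‖z‖ := mul_one _

variable {P w} {ε : ℝ} {f : ℂ → ℂ}

lemma mem_pseudospectrum_of_inv_le_norm (hf : ∀ z, sMin (polyEval P z) * ‖f z‖ ≤ wEval w ‖z‖)
    (hε : 0 < ε) {z : ℂ} (hz : ε⁻¹ ≤ ‖f z‖) : z ∈ pseudospectrum P w ε :=
  calc sMin (polyEval P z) = ε * (sMin (polyEval P z) * ε⁻¹) := by field_simp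
    _ ≤ ε * (sMin (polyEval P z) * ‖f z‖) := by
        gcongr
        exact sMin_nonneg _
    _ ≤ ε * wEval w ‖z‖ := by grw [hf z]

lemma sMin_lt_of_inv_lt_norm (hf : ∀ z, sMin (polyEval P z) * ‖f z‖ ≤ wEval w ‖z‖)
    (hε : 0 < ε) {z : ℂ} (hw : 0 < wEval w ‖z‖) (hz : ε⁻¹ < ‖f z‖) :
    sMin (polyEval P z) < ε * wEval w ‖z‖ := by
  rcases (sMin_nonneg (polyEval P z)).eq_or_lt with h0 | hpos
  · rw [← h0]
    positivity
  calc sMin (polyEval P z) = ε * (sMin (polyEval P z) * ε⁻¹) := by field_simp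
    _ < ε * (sMin (polyEval P z) * ‖f z‖) := by gcongr
    _ ≤ ε * wEval w ‖z‖ := by grw [hf z]

lemma exists_mem_connectedComponentIn_mem_interior_pseudospectrum (hw : ∀ j, 0 ≤ w j)
    (hw0 : 0 < w 0) (hε : 0 < ε) {x : ℂ} (hx : x ∈ pseudospectrum P w ε) :
    ∃ z ∈ connectedComponentIn (pseudospectrum P w ε) x, z ∈ interior (pseudospectrum P w ε) := by
  rcases (show sMin (polyEval P x) ≤ ε * wEval w ‖x‖ from hx).lt_or_eq with hlt | heq
  · exact ⟨x, mem_connectedComponentIn hx, setOf_sMin_lt_subset_interior_pseudospectrum P w ε hlt⟩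
  have hwx := wEval_pos w hw hw0 (norm_nonneg x)
  obtain ⟨f, hf, hfx, hf_le⟩ :=
    exists_analyticAt_sMin_mul_norm_le P w hw (heq ▸ mul_pos hε hwx)
  rw [heq, div_mul_cancel_right₀ hwx.ne'] at hfx
  by_cases hconst : ∀ᶠ z in 𝓝 x, f z = f x
  · refine ⟨x, mem_connectedComponentIn hx, mem_interior_iff_mem_nhds.mpr ?_⟩
    filter_upwards [hconst] with z hz
    exact mem_pseudospectrum_of_inv_le_norm hf_le hε (by rw [hz, hfx])
  obtain ⟨c, hc⟩ := hf.exists_norm_lt_norm_add_real_mul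
    (norm_ne_zero_iff.mp (hfx ▸ inv_ne_zero hε.ne')) hconst
  have hseg : (fun t : ℝ => x + t * c) '' Set.Icc 0 1 ⊆ pseudospectrum P w ε := by
    rintro _ ⟨t, ⟨ht0, ht1⟩, rfl⟩
    rcases ht0.eq_or_lt with rfl | ht0
    · simpa using hx
    · exact mem_pseudospectrum_of_inv_le_norm hf_le hε (hfx ▸ hc t ⟨ht0, ht1⟩).le
  refine ⟨x + c, (isPreconnected_Icc.image _ (by fun_prop)).subset_connectedComponentIn
    ⟨0, by simp, by simp⟩ hseg ⟨1, by simp, by simp⟩, ?_⟩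
  refine setOf_sMin_lt_subset_interior_pseudospectrum P w ε ?_
  exact sMin_lt_of_inv_lt_norm hf_le hε (wEval_pos w hw hw0 (norm_nonneg _))
    (by simpa [hfx] using hc 1 ⟨one_pos, le_rfl⟩)

end Pseudospectrum

theorem stmt15_general {n m : ℕ} (P : Fin (m + 1) → Matrix (Fin (n + 1)) (Fin (n + 1)) ℂ)
    (w : Fin (m + 1) → ℝ) (hw : ∀ j, 0 ≤ w j) (hw0 : 0 < w 0) (ε : ℝ) (hε : 0 < ε) :
    ∀ x ∈ {lam : ℂ | sMin (polyEval P lam) ≤ ε * wEval w (‖lam‖)},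
      (interior (connectedComponentIn
        {lam : ℂ | sMin (polyEval P lam) ≤ ε * wEval w (‖lam‖)} x)).Nonempty := by
  intro x hx
  obtain ⟨z, hz, hz_int⟩ :=
    exists_mem_connectedComponentIn_mem_interior_pseudospectrum hw hw0 hε hx
  exact interior_connectedComponentIn_nonempty hz hz_int

/-- For every `ε > 0`, every connected component of `Λ_ε(P)` has
non-empty interior. -/
theorem stmt15 {n m : ℕ} (P : Fin (m + 1) → Matrix (Fin (n + 1)) (Fin (n + 1)) ℂ)
    (hPm : (P (Fin.last m)).det ≠ 0)
    (w : Fin (m + 1) → ℝ) (hw : ∀ j, 0 ≤ w j) (hw0 : 0 < w 0) (ε : ℝ) (hε : 0 < ε) :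
    ∀ x ∈ {lam : ℂ | sMin (polyEval P lam) ≤ ε * wEval w (‖lam‖)},
      (interior (connectedComponentIn
        {lam : ℂ | sMin (polyEval P lam) ≤ ε * wEval w (‖lam‖)} x)).Nonempty :=
  stmt15_general P w hw hw0 ε hε
end
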